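/- Upward Löwenheim–Skolem for many-sorted logic (same cardinal for all infinite sorts): Let Σ be a many-sorted signature, 𝔸 a Σ-structure, and κ a cardinal with κ ≥ max(|Σ|, ℵ₀, sup{|σ^𝔸| : σ^𝔸 infinite}). Then there is a Σ-structure 𝔹 containing 𝔸 as an elementary substructure such that |σ^𝔹| = κ for every sort σ with σ^𝔸 infinite, and σ^𝔹 = σ^𝔸 for every sort σ with σ^𝔸 finite. -/

import Mathlib

set_option autoImplicit false

/-- A many-sorted first-order signature. -/
structure MSSignature : Type 1 where
  Sorts : Type
  Func : Type
  Pred : Type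
  funcDom : Func → List Sorts
  funcCod : Func → Sorts
  predDom : Pred → List Sorts

namespace MS

variable (Sg : MSSignature)

/-- Many-sorted terms; variables of each sort are indexed by naturals. -/
inductive Term : Sg.Sorts → Type where
  | var (s : Sg.Sorts) (n : ℕ) : Term s
  | app (f : Sg.Func)
      (args : ∀ i : Fin (Sg.funcDom f).length, Term ((Sg.funcDom f).get i)) :
      Term (Sg.funcCod f)

/-- Many-sorted first-order formulas. -/
inductive Formula : Type where
  | eq {s : Sg.Sorts} (t u : Term Sg s) : Formula
  | pred (P : Sg.Pred)
      (args : ∀ i : Fin (Sg.predDom P).length, Term Sg ((Sg.predDom P).get i)) : Formula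
  | falsum : Formula
  | imp (φ ψ : Formula) : Formula
  | all (s : Sg.Sorts) (n : ℕ) (φ : Formula) : Formula

/-- A structure for a many-sorted signature: each sort gets a nonempty domain. -/
structure Structure : Type 1 where
  dom : Sg.Sorts → Type
  dom_nonempty : ∀ s, Nonempty (dom s)
  interpFunc : ∀ f : Sg.Func,
    (∀ i : Fin (Sg.funcDom f).length, dom ((Sg.funcDom f).get i)) → dom (Sg.funcCod f)
  interpPred : ∀ P : Sg.Pred,
    (∀ i : Fin (Sg.predDom P).length, dom ((Sg.predDom P).get i)) → Prop

variable {Sg}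

/-- Variable assignments. -/
def Assign (A : Structure Sg) : Type := ∀ s : Sg.Sorts, ℕ → A.dom s

open Classical in
noncomputable
def Assign.update {A : Structure Sg} (ν : Assign A) (s : Sg.Sorts) (n : ℕ) (a : A.dom s) :
    Assign A := fun t m =>
  if h : s = t then (if m = n then h ▸ a else ν t m) else ν t m

def Term.eval {A : Structure Sg} (ν : Assign A) : ∀ {s : Sg.Sorts}, Term Sg s → A.dom s
  | _, .var s n => ν s n
  | _, .app f args => A.interpFunc f fun i => Term.eval ν (args i)

/-- Tarskian satisfaction. -/
def Sat (A : Structure Sg) (ν : Assign A) : Formula Sg → Prop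
  | .eq t u => t.eval ν = u.eval ν
  | .pred P args => A.interpPred P fun i => (args i).eval ν
  | .falsum => False
  | .imp φ ψ => Sat A ν φ → Sat A ν ψ
  | .all s n φ => ∀ a : A.dom s, Sat A (ν.update s n a) φ

/-- Derived connectives. -/
def Formula.not (φ : Formula Sg) : Formula Sg := .imp φ .falsum
def Formula.and (φ ψ : Formula Sg) : Formula Sg := (Formula.imp φ ψ.not).not
def Formula.or (φ ψ : Formula Sg) : Formula Sg := .imp φ.not ψ
def Formula.ex (s : Sg.Sorts) (n : ℕ) (φ : Formula Sg) : Formula Sg :=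
  ((Formula.all s n φ.not)).not
def Formula.andList : List (Formula Sg) → Formula Sg :=
  List.foldr Formula.and (Formula.not .falsum)
def Formula.orList : List (Formula Sg) → Formula Sg :=
  List.foldr Formula.or .falsum

/-- Occurrence of variable `(s, n)` in a term. -/
def Term.varOccurs (s : Sg.Sorts) (n : ℕ) : ∀ {t : Sg.Sorts}, Term Sg t → Prop
  | _, .var s' n' => s = s' ∧ n = n'
  | _, .app _ args => ∃ i, Term.varOccurs s n (args i)

/-- Free occurrence of variable `(s, n)` in a formula. -/
def Formula.varFree (s : Sg.Sorts) (n : ℕ) : Formula Sg → Prop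
  | .eq t u => t.varOccurs s n ∨ u.varOccurs s n
  | .pred _ args => ∃ i, (args i).varOccurs s n
  | .falsum => False
  | .imp φ ψ => φ.varFree s n ∨ ψ.varFree s n
  | .all s' n' φ => φ.varFree s n ∧ ¬(s = s' ∧ n = n')

def Formula.IsSentence (φ : Formula Sg) : Prop := ∀ s n, ¬ φ.varFree s n

/-- Quantifier-free formulas. -/
def Formula.IsQF : Formula Sg → Prop
  | .eq _ _ => True
  | .pred _ _ => True
  | .falsum => True
  | .imp φ ψ => φ.IsQF ∧ ψ.IsQF
  | .all _ _ _ => False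

/-- A structure is a model of a set of formulas (a theory) if it satisfies
every axiom under every assignment. -/
def Models (A : Structure Sg) (T : Set (Formula Sg)) : Prop :=
  ∀ φ ∈ T, ∀ ν : Assign A, Sat A ν φ

/-- Elementary equivalence: same sentences hold. -/
def ElemEquiv (A B : Structure Sg) : Prop :=
  ∀ φ : Formula Sg, φ.IsSentence →
    ((∀ ν : Assign A, Sat A ν φ) ↔ (∀ ν : Assign B, Sat B ν φ))

/-- Substructures: sort-wise subsets closed under the functions. -/
structure Substructure (A : Structure Sg) : Type 1 where
  carrier : ∀ s : Sg.Sorts, Set (A.dom s)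
  carrier_nonempty : ∀ s, (carrier s).Nonempty
  closed : ∀ (f : Sg.Func)
    (args : ∀ i : Fin (Sg.funcDom f).length, A.dom ((Sg.funcDom f).get i)),
    (∀ i, args i ∈ carrier _) → A.interpFunc f args ∈ carrier _

/-- The induced structure on a substructure. -/
def Substructure.toStructure {A : Structure Sg} (B : Substructure A) : Structure Sg where
  dom s := ↥(B.carrier s)
  dom_nonempty s := ⟨⟨(B.carrier_nonempty s).choose, (B.carrier_nonempty s).choose_spec⟩⟩
  interpFunc f args :=
    ⟨A.interpFunc f fun i => (args i).1, B.closed f _ fun i => (args i).2⟩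
  interpPred P args := A.interpPred P fun i => (args i).1

/-- View an assignment into a substructure as an assignment into the ambient structure. -/
def Substructure.amb {A : Structure Sg} (B : Substructure A)
    (ν : Assign B.toStructure) : Assign A := fun s n => (ν s n).1

/-- `B` is an elementary substructure of `A`. -/
def Substructure.IsElementary {A : Structure Sg} (B : Substructure A) : Prop :=
  ∀ (φ : Formula Sg) (ν : Assign B.toStructure),
    Sat B.toStructure ν φ ↔ Sat A (B.amb ν) φ

/-- Isomorphisms of structures. -/
structure Iso (A B : Structure Sg) : Type 1 where
  toEquiv : ∀ s, A.dom s ≃ B.dom s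
  map_func : ∀ (f : Sg.Func) args,
    toEquiv _ (A.interpFunc f args) = B.interpFunc f (fun i => toEquiv _ (args i))
  map_pred : ∀ (P : Sg.Pred) args,
    A.interpPred P args ↔ B.interpPred P (fun i => toEquiv _ (args i))

end MS

/-- The cardinality of a signature: sorts + function symbols + predicate symbols. -/
noncomputable def MSSignature.card (Sg : MSSignature) : Cardinal :=
  Cardinal.mk Sg.Sorts + Cardinal.mk Sg.Func + Cardinal.mk Sg.Pred

/-- A countable signature. -/
def MSSignature.IsCountable (Sg : MSSignature) : Prop :=
  Countable Sg.Sorts ∧ Countable Sg.Func ∧ Countable Sg.Pred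

open MS Cardinal

/-!
Code `A` as a one-sorted structure `M` in the language with a unary predicate for each sort:
the sorts of `A` side by side, plus infinitely many junk points. Many-sorted formulas translate
into relativized one-sorted ones with the same meaning, so the image of `A` in any elementary
extension `N` of `M`, read back as a many-sorted structure, is an elementary substructure.

To make `N` large, add to the elementary diagram of `M` pairwise distinct new constants
`c (s, i)`, `i < κ`, each in its sort `s`, for every infinite sort `s`. Finitely many of them
can be interpreted in `M` itself, so by compactness and downward Löwenheim–Skolem there is
a model `N` of cardinality exactly `κ`. A finite sort `{a₁, …, aₙ}` does not grow in `N`,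
being pinned down by the formula `∀ x, σ x → x = a₁ ∨ … ∨ x = aₙ`.
-/

theorem Finset.exists_injOn_forall_mem {ι α : Type*} (u : Finset ι) (S : ι → Set α)
    (hS : ∀ i, (S i).Infinite) : ∃ c : ι → α, Set.InjOn c u ∧ ∀ i ∈ u, c i ∈ S i := by
  classical
  induction u using Finset.induction_on with
  | empty => exact ⟨fun i => (hS i).nonempty.some, by simp, by simp⟩
  | insert a u ha ih =>
    obtain ⟨c, hinj, hmem⟩ := ih
    obtain ⟨x, hxS, hxc⟩ := ((hS a).sdiff (u.finite_toSet.image c)).nonempty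
    have hupd : ∀ i ∈ u, Function.update c a x i = c i := fun i hi =>
      Function.update_of_ne (ne_of_mem_of_not_mem hi ha) _ _
    refine ⟨Function.update c a x, ?_, ?_⟩
    · rw [Finset.coe_insert, Set.injOn_insert (by simpa using ha), Function.update_self,
        Set.image_congr hupd]
      exact ⟨hinj.congr fun i hi => (hupd i hi).symm, hxc⟩
    · intro i hi
      rcases Finset.mem_insert.1 hi with rfl | hi
      · simpa using hxS
      · simpa [hupd i hi] using hmem i hi

namespace FirstOrder.Language

open Structure Theory

section LargeRelations

variable (L : Language.{0, 0}) (M : Type) [L.Structure M] (K : Type)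

abbrev InfiniteRelIndex : Type :=
  {r : L.Relations 1 // {x : M | RelMap r ![x]}.Infinite} × K

variable {L M K} in
def InfiniteRelIndex.sentence (p : InfiniteRelIndex L M K) :
    L[[M]][[InfiniteRelIndex L M K]].Sentence :=
  Relations.formula₁
    ((L[[M]].lhomWithConstants _).onRelation ((L.lhomWithConstants M).onRelation p.1.1))
    (L[[M]].con p).term

def largeRelTheory (u : Set (InfiniteRelIndex L M K)) :
    L[[M]][[InfiniteRelIndex L M K]].Theory :=
  (L[[M]].lhomWithConstants _).onTheory (L.elementaryDiagram M) ∪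
    L[[M]].distinctConstantsTheory u ∪ InfiniteRelIndex.sentence '' u

theorem largeRelTheory_mono : Monotone (largeRelTheory L M K) := fun _ _ h =>
  Set.union_subset_union (Set.union_subset_union_right _ (distinctConstantsTheory_mono h))
    (Set.image_mono h)

theorem isSatisfiable_largeRelTheory [Nonempty M] (u : Finset (InfiniteRelIndex L M K)) :
    (largeRelTheory L M K u).IsSatisfiable := by
  obtain ⟨c, hinj, hmem⟩ :=
    u.exists_injOn_forall_mem (fun p => {x : M | RelMap p.1.1 ![x]}) fun p => p.1.2
  let := constantsOn.structure c
  have : M ⊨ largeRelTheory L M K u := by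
    refine (((LHom.onTheory_model _ _).2 inferInstance).union ?_).union ?_
    · exact (model_distinctConstantsTheory _ _).2 hinj
    · rw [Theory.model_iff]
      rintro _ ⟨p, hp, rfl⟩
      rw [InfiniteRelIndex.sentence, Sentence.Realize, Formula.realize_rel₁, LHom.map_onRelation,
        LHom.map_onRelation]
      exact hmem p hp
  exact Model.isSatisfiable M

variable {L M K} in
theorem exists_elementaryEmbedding_of_models_largeRelTheory (N : Type)
    [L[[M]][[InfiniteRelIndex L M K]].Structure N]
    (hN : N ⊨ ⋃ u : Finset (InfiniteRelIndex L M K), largeRelTheory L M K u) :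
    ∃ (_ : L.Structure N) (_ : M ↪ₑ[L] N) (c : InfiniteRelIndex L M K → N),
      Function.Injective c ∧ ∀ p, RelMap p.1.1 ![c p] := by
  classical
  let := (L[[M]].lhomWithConstants (InfiniteRelIndex L M K)).reduct N
  let := (L.lhomWithConstants M).reduct N
  have hstage (u : Finset (InfiniteRelIndex L M K)) : N ⊨ largeRelTheory L M K u :=
    hN.mono (Set.subset_iUnion_of_subset u subset_rfl)
  have : N ⊨ L.elementaryDiagram M := (LHom.onTheory_model _ _).1
    ((hstage ∅).mono (Set.subset_union_left.trans Set.subset_union_left))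
  refine ⟨_, ElementaryEmbedding.ofModelsElementaryDiagram L M N, fun p => L[[M]].con p, ?_, ?_⟩
  · intro p q hpq
    have := (hstage {p, q}).mono (Set.subset_union_right.trans Set.subset_union_left)
    exact (model_distinctConstantsTheory _ _).1 this (by simp) (by simp) hpq
  · intro p
    have := (hstage {p}).realize_of_mem (InfiniteRelIndex.sentence p)
      (Set.mem_union_right _ (by simp))
    rwa [InfiniteRelIndex.sentence, Sentence.Realize, Formula.realize_rel₁, LHom.map_onRelation,
      LHom.map_onRelation, Term.realize_constants] at this

theorem exists_elementaryEmbedding_card_eq_and_le_card_relMap [Infinite M] (κ : Cardinal.{0})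
    (h1 : ℵ₀ ≤ κ) (h2 : L.card ≤ κ) (h3 : #M ≤ κ) :
    ∃ (N : Type) (_ : L.Structure N) (_ : M ↪ₑ[L] N), #N = κ ∧
      ∀ r : L.Relations 1, {x : M | RelMap r ![x]}.Infinite → κ ≤ #{y : N // RelMap r ![y]} := by
  set I := InfiniteRelIndex L M κ.out
  have hI : #I ≤ κ := by
    rw [mk_prod, lift_id, lift_id, mk_out]
    calc #{r : L.Relations 1 // _} * κ ≤ κ * κ := by
          gcongr
          refine (mk_subtype_le _).trans (le_trans ?_ h2)
          exact mk_le_of_injective (f := fun r : L.Relations 1 => (Sum.inr ⟨1, r⟩ : L.Symbols))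
            fun _ _ h => by simpa using h
      _ = κ := mul_eq_self h1
  obtain ⟨W⟩ : Theory.IsSatisfiable (⋃ u : Finset I, largeRelTheory L M κ.out u) :=
    (isSatisfiable_directed_union_iff
      ((largeRelTheory_mono L M κ.out).comp fun _ _ => Finset.coe_subset.2).directed_le).2
      (isSatisfiable_largeRelTheory L M κ.out)
  obtain ⟨_, gW, -⟩ := exists_elementaryEmbedding_of_models_largeRelTheory W W.is_model
  obtain ⟨N, hN⟩ := exists_model_card_eq ⟨W, Infinite.of_injective gW gW.injective⟩ κ h1 (by
    simp only [card_withConstants, lift_id]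
    calc L.card + #M + #I ≤ κ + κ + κ := by gcongr
      _ = κ := by rw [add_eq_self h1, add_eq_self h1])
  obtain ⟨_, g, c, hc, hcr⟩ := exists_elementaryEmbedding_of_models_largeRelTheory N N.is_model
  refine ⟨N, _, g, hN, fun r hr => ?_⟩
  calc κ = #κ.out := (mk_out κ).symm
    _ ≤ #{y : N // RelMap r ![y]} :=
      mk_le_of_injective (f := fun k => ⟨c (⟨r, hr⟩, k), hcr (⟨r, hr⟩, k)⟩)
        fun k k' h => congrArg Prod.snd (hc (congrArg Subtype.val h))

end LargeRelations

theorem ElementaryEmbedding.mem_range_of_relMap {L : Language} {M N : Type*} [L.Structure M]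
    [L.Structure N] (g : M ↪ₑ[L] N) {r : L.Relations 1} (hfin : {x : M | RelMap r ![x]}.Finite)
    {y : N} (hy : RelMap r ![y]) : y ∈ Set.range g := by
  have := hfin.to_subtype
  let φ : L.Formula {x : M | RelMap r ![x]} :=
    ∀' (r.boundedFormula₁ &0 ⟹ BoundedFormula.iSup fun a => (&0).bdEqual (Term.var (Sum.inl a)))
  have hM : φ.Realize Subtype.val := by simp [φ, Formula.Realize, Fin.snoc]
  have hN := (g.map_formula φ Subtype.val).2 hM
  simp only [φ, Formula.Realize, BoundedFormula.realize_all, BoundedFormula.realize_imp,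
    BoundedFormula.realize_rel₁, BoundedFormula.realize_iSup, BoundedFormula.realize_bdEqual] at hN
  obtain ⟨a, ha⟩ := hN y (by simpa [Fin.snoc] using hy)
  exact ⟨a, by simpa [Fin.snoc] using ha.symm⟩

end FirstOrder.Language

namespace MS

variable {Sg : MSSignature}

namespace Iso

variable {A B C : Structure Sg}

def trans (e : Iso A B) (e' : Iso B C) : Iso A C where
  toEquiv s := (e.toEquiv s).trans (e'.toEquiv s)
  map_func f args := by simp [e.map_func, e'.map_func]
  map_pred P args := (e.map_pred P args).trans (e'.map_pred P _)

def mapAssign (e : Iso A B) (ν : Assign A) : Assign B := fun s n => e.toEquiv s (ν s n)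

theorem mapAssign_surjective (e : Iso A B) : Function.Surjective e.mapAssign := fun ν =>
  ⟨fun s n => (e.toEquiv s).symm (ν s n), funext₂ fun s _ => (e.toEquiv s).apply_symm_apply _⟩

theorem eval_mapAssign (e : Iso A B) (ν : Assign A) {s : Sg.Sorts} (t : Term Sg s) :
    t.eval (e.mapAssign ν) = e.toEquiv s (t.eval ν) := by
  induction t with
  | var s n => rfl
  | app f args ih => exact (congrArg _ (funext ih)).trans (e.map_func f _).symm

theorem mapAssign_update (e : Iso A B) (ν : Assign A) (s : Sg.Sorts) (n : ℕ) (a : A.dom s) :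
    (e.mapAssign ν).update s n (e.toEquiv s a) = e.mapAssign (ν.update s n a) := by
  funext t m
  by_cases hts : s = t
  · subst hts
    by_cases hmn : m = n <;> simp [mapAssign, Assign.update, hmn]
  · simp [mapAssign, Assign.update, hts]

theorem sat_mapAssign_iff (e : Iso A B) (φ : Formula Sg) (ν : Assign A) :
    Sat B (e.mapAssign ν) φ ↔ Sat A ν φ := by
  induction φ generalizing ν with
  | eq t u => simp only [Sat, eval_mapAssign, EmbeddingLike.apply_eq_iff_eq]
  | pred P args => simp only [Sat, eval_mapAssign, ← e.map_pred]
  | falsum => rfl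
  | imp φ ψ ihφ ihψ => simp only [Sat, ihφ, ihψ]
  | all s n φ ih =>
    refine (Equiv.forall_congr (e.toEquiv s) fun a => ?_).symm
    rw [mapAssign_update, ih]

end Iso

theorem Substructure.mk_dom_eq_of_carrier_eq_univ {A B : Structure Sg} {C : Substructure B}
    (e : Iso A C.toStructure) {s : Sg.Sorts} (hC : C.carrier s = Set.univ) :
    #(B.dom s) = #(A.dom s) := by
  rw [← mk_univ, ← hC]
  exact mk_congr (e.toEquiv s).symm

variable (Sg) in
inductive OneSortedFunc : ℕ → Type
  | mk (f : Sg.Func) : OneSortedFunc (Sg.funcDom f).length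

variable (Sg) in
inductive OneSortedRel : ℕ → Type
  | pred (P : Sg.Pred) : OneSortedRel (Sg.predDom P).length
  | sort (s : Sg.Sorts) : OneSortedRel 1

end MS

namespace MSSignature

open FirstOrder Language

variable (Sg : MSSignature)

abbrev language : Language := ⟨MS.OneSortedFunc Sg, MS.OneSortedRel Sg⟩

abbrev funcSymb (f : Sg.Func) : Sg.language.Functions (Sg.funcDom f).length := .mk f

abbrev predSymb (P : Sg.Pred) : Sg.language.Relations (Sg.predDom P).length := .pred P

abbrev sortSymb (s : Sg.Sorts) : Sg.language.Relations 1 := .sort s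

theorem card_language_le : Sg.language.card ≤ Sg.card := by
  let e : Sg.language.Symbols → Sg.Func ⊕ Sg.Pred ⊕ Sg.Sorts
    | .inl ⟨_, .mk f⟩ => .inl f
    | .inr ⟨_, .pred P⟩ => .inr (.inl P)
    | .inr ⟨_, .sort s⟩ => .inr (.inr s)
  have he : Function.Injective e := by
    rintro (⟨_, ⟨f⟩⟩ | ⟨_, P | s⟩) (⟨_, ⟨f'⟩⟩ | ⟨_, P' | s'⟩) h <;> cases h <;> rfl
  calc Sg.language.card ≤ #(Sg.Func ⊕ Sg.Pred ⊕ Sg.Sorts) := mk_le_of_injective he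
    _ = Sg.card := by simp only [mk_sum, lift_id, card]; ring

theorem mk_sorts_le_card : #Sg.Sorts ≤ Sg.card :=
  (self_le_add_right _ _).trans (self_le_add_right _ _)

end MSSignature

namespace MS

open FirstOrder Language Structure

variable {Sg : MSSignature} {M N : Type} [Sg.language.Structure M] [Sg.language.Structure N]

abbrev InSort (s : Sg.Sorts) (x : N) : Prop := RelMap (Sg.sortSymb s) ![x]

variable (Sg N) in
structure WellSorted : Prop where
  inSort_funMap (f : Sg.Func) (v : Fin (Sg.funcDom f).length → N) :
    (∀ i, InSort ((Sg.funcDom f).get i) (v i)) →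
      InSort (Sg.funcCod f) (funMap (Sg.funcSymb f) v)
  exists_inSort (s : Sg.Sorts) : ∃ x : N, InSort s x

def WellSorted.toStructure (h : WellSorted Sg N) : MS.Structure Sg where
  dom s := {x : N // InSort s x}
  dom_nonempty s := let ⟨x, hx⟩ := h.exists_inSort s; ⟨⟨x, hx⟩⟩
  interpFunc f args := ⟨funMap (Sg.funcSymb f) fun i => (args i).1,
    h.inSort_funMap f _ fun i => (args i).2⟩
  interpPred P args := RelMap (Sg.predSymb P) fun i => (args i).1

def Term.relativize : ∀ {s : Sg.Sorts}, Term Sg s → Sg.language.Term (Sg.Sorts × ℕ)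
  | _, .var s n => Language.Term.var (s, n)
  | _, .app f args => Language.Term.func (Sg.funcSymb f) fun i => (args i).relativize

open Classical in
noncomputable def Formula.relativize : Formula Sg → Sg.language.Formula (Sg.Sorts × ℕ)
  | .eq t u => t.relativize.equal u.relativize
  | .pred P args => (Sg.predSymb P).formula fun i => (args i).relativize
  | .falsum => ⊥
  | .imp φ ψ => φ.relativize ⟹ ψ.relativize
  | .all s n φ => Formula.iAlls Unit ((Sg.sortSymb s).formula₁ (.var (.inr ())) ⟹
      φ.relativize.relabel fun p => if p = (s, n) then .inr () else .inl p)

def Assign.toValuation {h : WellSorted Sg N} (ν : Assign h.toStructure) : Sg.Sorts × ℕ → N :=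
  fun p => (ν p.1 p.2).1

section Relativize

variable {h : WellSorted Sg N}

theorem Term.realize_relativize (ν : Assign h.toStructure) {s : Sg.Sorts} (t : Term Sg s) :
    t.relativize.realize ν.toValuation = (t.eval ν).1 := by
  induction t with
  | var s n => rfl
  | app f args ih => exact congrArg (funMap _) (funext ih)

open Classical in
theorem Assign.toValuation_update (ν : Assign h.toStructure) (s : Sg.Sorts) (n : ℕ)
    (a : h.toStructure.dom s) :
    (ν.update s n a).toValuation = fun p => Sum.elim ν.toValuation (fun _ : Unit => a.1)
      (if p = (s, n) then .inr () else .inl p) := by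
  funext ⟨t, m⟩
  by_cases hts : s = t
  · subst hts
    by_cases hmn : m = n <;> simp [toValuation, Assign.update, hmn]
  · simp [toValuation, Assign.update, hts, Ne.symm hts]

theorem Formula.sat_iff_realize_relativize (φ : Formula Sg) (ν : Assign h.toStructure) :
    Sat h.toStructure ν φ ↔ φ.relativize.Realize ν.toValuation := by
  induction φ generalizing ν with
  | eq t u =>
    simp only [Sat, relativize, Formula.realize_equal, Term.realize_relativize]
    exact Subtype.ext_iff
  | pred P args =>
    simp only [Sat, relativize, Formula.realize_rel, Term.realize_relativize]
    rfl
  | falsum => simp [Sat, relativize]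
  | imp φ ψ ihφ ihψ => simp only [Sat, relativize, Formula.realize_imp, ihφ, ihψ]
  | all s n φ ih =>
    simp only [Sat, relativize, Formula.realize_iAlls, Formula.realize_imp, Formula.realize_rel₁,
      Formula.realize_relabel]
    refine ⟨fun H i hi => ?_, fun H a => ?_⟩
    · have := (ih _).1 (H ⟨i (), hi⟩)
      rwa [Assign.toValuation_update ν s n ⟨i (), hi⟩] at this
    · rw [ih, Assign.toValuation_update]
      exact H (fun _ => a.1) a.2

end Relativize

variable (Sg) in
noncomputable def inSortFunMapSentence (f : Sg.Func) : Sg.language.Sentence :=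
  BoundedFormula.alls ((BoundedFormula.iInf fun i =>
      (Sg.sortSymb ((Sg.funcDom f).get i)).boundedFormula₁ &i) ⟹
    (Sg.sortSymb (Sg.funcCod f)).boundedFormula₁ (.func (Sg.funcSymb f) fun i => &i))

theorem realize_inSortFunMapSentence (f : Sg.Func) :
    N ⊨ inSortFunMapSentence Sg f ↔ ∀ v : Fin (Sg.funcDom f).length → N,
      (∀ i, InSort ((Sg.funcDom f).get i) (v i)) →
        InSort (Sg.funcCod f) (funMap (Sg.funcSymb f) v) := by
  simp only [inSortFunMapSentence, Sentence.Realize, BoundedFormula.realize_alls,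
    BoundedFormula.realize_imp, BoundedFormula.realize_iInf, BoundedFormula.realize_rel₁]
  simp

theorem inSort_map (g : M ↪ₑ[Sg.language] N) {s : Sg.Sorts} {x : M} :
    InSort s (g x) ↔ InSort s x := by
  unfold InSort
  rw [Matrix.vec_single_eq_const, Matrix.vec_single_eq_const]
  exact g.map_rel _ _

theorem WellSorted.map (h : WellSorted Sg M) (g : M ↪ₑ[Sg.language] N) : WellSorted Sg N where
  inSort_funMap f := (realize_inSortFunMapSentence f).1
    ((g.map_sentence _).1 ((realize_inSortFunMapSentence f).2 (h.inSort_funMap f)))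
  exists_inSort s := let ⟨x, hx⟩ := h.exists_inSort s; ⟨g x, inSort_map g |>.2 hx⟩

section Image

variable (h : WellSorted Sg M) (g : M ↪ₑ[Sg.language] N)

def imageSubstructure : Substructure (h.map g).toStructure where
  carrier _ := {y | y.1 ∈ Set.range g}
  carrier_nonempty s :=
    let ⟨x, hx⟩ := h.exists_inSort s
    ⟨⟨g x, inSort_map g |>.2 hx⟩, x, rfl⟩
  closed f args hargs := by
    choose xs hxs using hargs
    refine ⟨funMap (Sg.funcSymb f) xs, ?_⟩
    rw [g.map_fun]
    exact congrArg _ (funext hxs)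

noncomputable def isoImageSubstructure :
    Iso h.toStructure (imageSubstructure h g).toStructure where
  toEquiv s := Equiv.ofBijective (fun x => ⟨⟨g x.1, inSort_map g |>.2 x.2⟩, x.1, rfl⟩)
    ⟨fun x x' hxx' => Subtype.ext (g.injective (congrArg (·.1.1) hxx')), by
      rintro ⟨⟨y, hy⟩, x, hx⟩
      obtain rfl : g x = y := hx
      exact ⟨⟨x, inSort_map g |>.1 hy⟩, rfl⟩⟩
  map_func f args := Subtype.ext (Subtype.ext (g.map_fun (Sg.funcSymb f) fun i => (args i).1))
  map_pred P args := (g.map_rel _ _).symm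

theorem imageSubstructure_isElementary : (imageSubstructure h g).IsElementary := by
  intro φ ν
  obtain ⟨μ, rfl⟩ := (isoImageSubstructure h g).mapAssign_surjective ν
  rw [Iso.sat_mapAssign_iff, Formula.sat_iff_realize_relativize,
    Formula.sat_iff_realize_relativize, ← g.map_formula]
  rfl

theorem imageSubstructure_carrier_eq_univ {s : Sg.Sorts} [Finite (h.toStructure.dom s)] :
    (imageSubstructure h g).carrier s = Set.univ :=
  Set.eq_univ_of_forall fun y =>
    g.mem_range_of_relMap (Set.finite_coe_iff.1 ‹Finite (h.toStructure.dom s)›) y.2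

end Image

namespace Structure

variable (A : Structure Sg)

-- The junk points make the carrier infinite, so that it has elementary extensions of every
-- infinite cardinality, and absorb ill-sorted function applications.
inductive OneSorted : Type
  | ofSort (s : Sg.Sorts) (a : A.dom s)
  | junk (n : ℕ)

variable {A}

theorem OneSorted.ofSort_injective (s : Sg.Sorts) :
    Function.Injective (OneSorted.ofSort (A := A) s) :=
  fun _ _ h => eq_of_heq (OneSorted.ofSort.inj h).2

instance : Infinite A.OneSorted := Infinite.of_injective _ fun _ _ => OneSorted.junk.inj

open Classical in
noncomputable instance : Sg.language.Structure A.OneSorted where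
  funMap
    | .mk f, v => if hv : ∃ args, ∀ i, v i = .ofSort _ (args i)
        then .ofSort _ (A.interpFunc f hv.choose) else .junk 0
  RelMap
    | .pred P, v => ∃ args, (∀ i, v i = .ofSort _ (args i)) ∧ A.interpPred P args
    | .sort s, v => ∃ a, v 0 = .ofSort s a

theorem inSort_oneSorted_iff {s : Sg.Sorts} {x : A.OneSorted} :
    InSort s x ↔ ∃ a, x = .ofSort s a := Iff.rfl

theorem funMap_oneSorted (f : Sg.Func) (args : ∀ i, A.dom ((Sg.funcDom f).get i)) :
    funMap (Sg.funcSymb f) (fun i => OneSorted.ofSort _ (args i)) =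
      OneSorted.ofSort _ (A.interpFunc f args) := by
  have hv : ∃ args' : ∀ i, A.dom ((Sg.funcDom f).get i),
      ∀ i, OneSorted.ofSort _ (args i) = OneSorted.ofSort _ (args' i) :=
    ⟨args, fun _ => rfl⟩
  have hchoose : hv.choose = args :=
    funext fun i => (OneSorted.ofSort_injective _ (hv.choose_spec i)).symm
  exact (dif_pos hv).trans (congrArg _ (congrArg _ hchoose))

theorem relMap_oneSorted (P : Sg.Pred) (args : ∀ i, A.dom ((Sg.predDom P).get i)) :
    RelMap (Sg.predSymb P) (fun i => OneSorted.ofSort _ (args i)) ↔ A.interpPred P args := by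
  refine ⟨fun ⟨args', hargs', hP⟩ => ?_, fun hP => ⟨args, fun _ => rfl, hP⟩⟩
  rwa [funext fun i => OneSorted.ofSort_injective _ (hargs' i)]

variable (A) in
theorem wellSorted_oneSorted : WellSorted Sg A.OneSorted where
  inSort_funMap f v hv := by
    choose args hargs using fun i => inSort_oneSorted_iff.1 (hv i)
    rw [funext hargs, funMap_oneSorted]
    exact ⟨_, rfl⟩
  exists_inSort s := let ⟨a⟩ := A.dom_nonempty s; ⟨.ofSort s a, a, rfl⟩

variable (A) in
noncomputable def isoOneSorted : Iso A (wellSorted_oneSorted A).toStructure where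
  toEquiv s := Equiv.ofBijective (fun a => ⟨.ofSort s a, a, rfl⟩)
    ⟨fun _ _ h => OneSorted.ofSort_injective s (congrArg Subtype.val h),
      fun ⟨_, a, hx⟩ => ⟨a, Subtype.ext hx.symm⟩⟩
  map_func f args := Subtype.ext (funMap_oneSorted f args).symm
  map_pred P args := (relMap_oneSorted P args).symm

theorem mk_oneSorted_le {κ : Cardinal} (hκ : ℵ₀ ≤ κ) (hSorts : #Sg.Sorts ≤ κ)
    (hdom : ∀ s, #(A.dom s) ≤ κ) : #A.OneSorted ≤ κ := by
  let e : A.OneSorted → (Σ s, A.dom s) ⊕ ℕ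
    | .ofSort s a => .inl ⟨s, a⟩
    | .junk n => .inr n
  have he : Function.Injective e := by
    rintro (⟨s, a⟩ | n) (⟨s', a'⟩ | n') h <;> cases h <;> rfl
  calc #A.OneSorted ≤ #((Σ s, A.dom s) ⊕ ℕ) := mk_le_of_injective he
    _ ≤ #Sg.Sorts * κ + κ := by
      rw [mk_sum, mk_sigma, lift_id, lift_id, mk_nat, ← sum_const']
      exact add_le_add (sum_le_sum _ _ hdom) hκ
    _ ≤ κ * κ + κ := by gcongr
    _ = κ := by rw [mul_eq_self hκ, add_eq_self hκ]

end Structure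

end MS

theorem many_sorted_upward_LS {Sg : MSSignature} (A : Structure Sg) (κ : Cardinal)
    (hsig : max Sg.card ℵ₀ ≤ κ)
    (hdom : ∀ s : Sg.Sorts, Infinite (A.dom s) → #(A.dom s) ≤ κ) :
    ∃ (B : Structure Sg) (C : Substructure B), C.IsElementary ∧
      Nonempty (Iso A C.toStructure) ∧
      (∀ s : Sg.Sorts, Infinite (A.dom s) → #(B.dom s) = κ) ∧
      (∀ s : Sg.Sorts, Finite (A.dom s) → C.carrier s = Set.univ ∧ #(B.dom s) = #(A.dom s)) := by
  have hκ : ℵ₀ ≤ κ := le_of_max_le_right hsig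
  have hSg : Sg.card ≤ κ := le_of_max_le_left hsig
  have hdom' (s : Sg.Sorts) : #(A.dom s) ≤ κ := by
    rcases finite_or_infinite (A.dom s) with hs | hs
    · exact (lt_aleph0_of_finite _).le.trans hκ
    · exact hdom s hs
  obtain ⟨N, _, g, hN, hlarge⟩ :=
    FirstOrder.Language.exists_elementaryEmbedding_card_eq_and_le_card_relMap Sg.language
      A.OneSorted κ hκ (Sg.card_language_le.trans hSg)
      (Structure.mk_oneSorted_le hκ (Sg.mk_sorts_le_card.trans hSg) hdom')
  let hA := Structure.wellSorted_oneSorted A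
  let e := (Structure.isoOneSorted A).trans (isoImageSubstructure hA g)
  refine ⟨_, _, imageSubstructure_isElementary hA g, ⟨e⟩, fun s hs => ?_, fun s hs => ?_⟩
  · have : Infinite (hA.toStructure.dom s) := .of_injective _ (A.isoOneSorted.toEquiv s).injective
    exact le_antisymm ((mk_subtype_le _).trans hN.le) (hlarge _ (Set.infinite_coe_iff.1 this))
  · have : Finite (hA.toStructure.dom s) := .of_equiv _ (A.isoOneSorted.toEquiv s)
    have hC := imageSubstructure_carrier_eq_univ hA g (s := s)
    exact ⟨hC, Substructure.mk_dom_eq_of_carrier_eq_univ e hC⟩
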